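/- Fix real parameters γ, α with γ > 1 and α > 0, real constants b̃₁₃, b̃₁₄, and let P = diag(α², (γ−1)/2, (γ−1)/2, 1). For Φ = (φ₁,φ₂,φ₃,φ₄) ∈ ℝ⁴ with φ₁ ≠ 0 set u = φ₂/φ₁, v = φ₃/φ₁ and define the 4×4 matrices B(Φ) = (1/2)·[[v,0,1,0],[−uv, 2v, u, 0],[−v², 0, 3v, 4φ₄/φ₁],[−γv φ₄/φ₁, 0, γ φ₄/φ₁, 2v]] and B̃(Φ) = [[α²v, 0, b̃₁₃φ₃, b̃₁₄φ₄],[0, ((γ−1)/2)v, 0, 0],[−2b̃₁₃φ₃, 0, b̃₁₃φ₁ + ((γ−1)/2)v, 0],[−2b̃₁₄φ₄, 0, 2(γ−1)φ₄/φ₁, b̃₁₄φ₁ + (2−γ)v]]. Then for every differentiable function Φ : ℝ → ℝ⁴ with φ₁(y) ≠ 0 for all y, the identity (d/dy)( B̃(Φ(y)) Φ(y) ) + B̃(Φ(y))ᵀ Φ'(y) = 2 P B(Φ(y)) Φ'(y) holds for all y. -/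

import Mathlib

/-!
`B̃(Φ) Φ` is a rational function `F(Φ)` of `Φ` alone, so by the chain rule
`(B̃(Φ) Φ)_y = DF(Φ) Φ_y`. The relation therefore reduces to the pointwise matrix identity
`DF(Φ) + B̃(Φ)ᵀ = 2 P B(Φ)`, valid wherever `φ₁ ≠ 0` and checked entry by entry.
-/

open Matrix

/-- The diagonal norm matrix `P = diag(α², (γ−1)/2, (γ−1)/2, 1)`. -/
noncomputable def normP (γ α : ℝ) : Matrix (Fin 4) (Fin 4) ℝ :=
  Matrix.diagonal ![α ^ 2, (γ - 1) / 2, (γ - 1) / 2, 1]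

/-- The `y`-direction coefficient matrix `B(Φ)` of the transformed Euler equations. -/
noncomputable def matB (γ : ℝ) (φ : Fin 4 → ℝ) : Matrix (Fin 4) (Fin 4) ℝ :=
  let u := φ 1 / φ 0
  let v := φ 2 / φ 0
  let q := φ 3 / φ 0
  (1 / 2 : ℝ) • !![v, 0, 1, 0;
                   -(u * v), 2 * v, u, 0;
                   -v ^ 2, 0, 3 * v, 4 * q;
                   -(γ * v * q), 0, γ * q, 2 * v]

/-- The derived matrix `B̃(Φ)` (with free parameters `b̃₁₃, b̃₁₄`). -/
noncomputable def matBtil (γ α b13 b14 : ℝ) (φ : Fin 4 → ℝ) : Matrix (Fin 4) (Fin 4) ℝ :=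
  let v := φ 2 / φ 0
  let q := φ 3 / φ 0
  !![α ^ 2 * v, 0, b13 * φ 2, b14 * φ 3;
     0, (γ - 1) / 2 * v, 0, 0;
     -(2 * b13 * φ 2), 0, b13 * φ 0 + (γ - 1) / 2 * v, 0;
     -(2 * b14 * φ 3), 0, 2 * (γ - 1) * q, b14 * φ 0 + (2 - γ) * v]

noncomputable def fluxBtil (γ α b13 b14 : ℝ) (φ : Fin 4 → ℝ) : Fin 4 → ℝ :=
  ![α ^ 2 * φ 2 + b13 * φ 2 ^ 2 + b14 * φ 3 ^ 2,
    (γ - 1) / 2 * (φ 1 * φ 2 / φ 0),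
    -(b13 * φ 0 * φ 2) + (γ - 1) / 2 * (φ 2 ^ 2 / φ 0),
    -(b14 * φ 0 * φ 3) + γ * (φ 2 * φ 3 / φ 0)]

noncomputable def jacFluxBtil (γ α b13 b14 : ℝ) (φ : Fin 4 → ℝ) : Matrix (Fin 4) (Fin 4) ℝ :=
  let c := (γ - 1) / 2
  let u := φ 1 / φ 0
  let v := φ 2 / φ 0
  let q := φ 3 / φ 0
  !![0, 0, α ^ 2 + 2 * b13 * φ 2, 2 * b14 * φ 3;
     -(c * u * v), c * v, c * u, 0;
     -(b13 * φ 2 + c * v ^ 2), 0, -(b13 * φ 0) + 2 * c * v, 0;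
     -(b14 * φ 3 + γ * v * q), 0, γ * q, -(b14 * φ 0) + γ * v]

section

variable (γ α b13 b14 : ℝ) {φ : Fin 4 → ℝ}

theorem matBtil_mulVec_self (hφ : φ 0 ≠ 0) :
    matBtil γ α b13 b14 φ *ᵥ φ = fluxBtil γ α b13 b14 φ := by
  ext i
  fin_cases i <;>
    simp only [matBtil, fluxBtil, mulVec, dotProduct, Fin.sum_univ_four, of_apply, cons_val',
      cons_val_zero, cons_val_one, cons_val, cons_val_fin_one, Fin.isValue, Fin.zero_eta,
      Fin.mk_one, Fin.reduceFinMk] <;>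
    field_simp <;> ring

theorem jacFluxBtil_add_transpose (hφ : φ 0 ≠ 0) :
    jacFluxBtil γ α b13 b14 φ + (matBtil γ α b13 b14 φ)ᵀ = (2 : ℝ) • (normP γ α * matB γ φ) := by
  ext i j
  fin_cases i <;> fin_cases j <;>
    simp only [jacFluxBtil, matBtil, normP, matB, Matrix.add_apply, transpose_apply,
      Matrix.smul_apply, smul_of, smul_cons, smul_empty, smul_eq_mul, mul_apply, Fin.sum_univ_four,
      diagonal_apply_eq, diagonal_apply_ne, ne_eq, Fin.reduceEq, not_false_eq_true, of_apply,
      cons_val', cons_val_zero, cons_val_one, cons_val, cons_val_fin_one, Fin.isValue,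
      Fin.zero_eta, Fin.mk_one, Fin.reduceFinMk] <;>
    field_simp <;> ring

theorem HasDerivAt.fluxBtil {c : ℝ → Fin 4 → ℝ} {c' : Fin 4 → ℝ} {y : ℝ}
    (hc : HasDerivAt c c' y) (hc0 : c y 0 ≠ 0) :
    HasDerivAt (fun s => fluxBtil γ α b13 b14 (c s)) (jacFluxBtil γ α b13 b14 (c y) *ᵥ c') y := by
  have h : ∀ i, HasDerivAt (fun s => c s i) (c' i) y := hasDerivAt_pi.mp hc
  refine hasDerivAt_pi.mpr fun i => ?_
  fin_cases i <;>
    simp only [jacFluxBtil, mulVec, dotProduct, Fin.sum_univ_four, of_apply, cons_val',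
      cons_val_zero, cons_val_one, cons_val, cons_val_fin_one, Fin.isValue, Fin.zero_eta,
      Fin.mk_one, Fin.reduceFinMk]
  · exact (((h 2).const_mul (α ^ 2)).add (((h 2).pow 2).const_mul b13) |>.add
      (((h 3).pow 2).const_mul b14)).congr_deriv (by
        simp only [Nat.cast_ofNat, Nat.add_one_sub_one, pow_one]; ring)
  · exact ((((h 1).mul (h 2)).div (h 0) hc0).const_mul ((γ - 1) / 2)).congr_deriv (by
      simp only [Pi.mul_apply]; field_simp; ring)
  · exact ((((h 0).const_mul b13).mul (h 2)).neg.add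
      ((((h 2).pow 2).div (h 0) hc0).const_mul ((γ - 1) / 2))).congr_deriv (by
        simp only [Nat.cast_ofNat, Nat.add_one_sub_one, pow_one, Pi.pow_apply]; field_simp; ring)
  · exact ((((h 0).const_mul b14).mul (h 3)).neg.add
      ((((h 2).mul (h 3)).div (h 0) hc0).const_mul γ)).congr_deriv (by
        simp only [Pi.mul_apply]; field_simp; ring)

end

theorem stmt_5_general (γ α b13 b14 : ℝ)
    (Φ : ℝ → Fin 4 → ℝ) (hΦ : Differentiable ℝ Φ) (hφ1 : ∀ y, Φ y 0 ≠ 0) :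
    ∀ y, deriv (fun s => (matBtil γ α b13 b14 (Φ s)).mulVec (Φ s)) y
        + (matBtil γ α b13 b14 (Φ y))ᵀ.mulVec (deriv Φ y)
      = (2 : ℝ) • ((normP γ α * matB γ (Φ y)).mulVec (deriv Φ y)) := by
  intro y
  have hflux : (fun s => matBtil γ α b13 b14 (Φ s) *ᵥ Φ s) = fun s => fluxBtil γ α b13 b14 (Φ s) :=
    funext fun s => matBtil_mulVec_self γ α b13 b14 (hφ1 s)
  rw [hflux, ((hΦ y).hasDerivAt.fluxBtil γ α b13 b14 (hφ1 y)).deriv, ← add_mulVec,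
    jacFluxBtil_add_transpose γ α b13 b14 (hφ1 y), smul_mulVec]

/-- **Task 3, y-direction:** the matrices `B̃(Φ)` and `P` solve the system of ODE relations
`(B̃ Φ)_y + B̃ᵀ Φ_y = 2 P B Φ_y` along any differentiable curve `Φ` with `φ₁ ≠ 0`. -/
theorem stmt_5 (γ α b13 b14 : ℝ) (hγ : 1 < γ) (hα : 0 < α)
    (Φ : ℝ → Fin 4 → ℝ) (hΦ : Differentiable ℝ Φ) (hφ1 : ∀ y, Φ y 0 ≠ 0) :
    ∀ y, deriv (fun s => (matBtil γ α b13 b14 (Φ s)).mulVec (Φ s)) y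
        + (matBtil γ α b13 b14 (Φ y))ᵀ.mulVec (deriv Φ y)
      = (2 : ℝ) • ((normP γ α * matB γ (Φ y)).mulVec (deriv Φ y)) :=
  stmt_5_general γ α b13 b14 Φ hΦ hφ1
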